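/- arXiv:1105.5499 — 4 statements merged into one kernel-verified Lean document; each statement's English description precedes it below -/
import Mathlib

section
/- Let 0 < p₁ < 1 and p₁ < p₂ ≤ ∞. Then for all N, n ∈ ℕ with n ≥ 1, the n-th Kolmogorov numbers satisfy d_n(id : ℓ_{p₁}^N → ℓ_{p₂}^N) = d_n(id : ℓ_{min(1,p₂)}^N → ℓ_{p₂}^N). -/
/-!
Write `r = min 1 p₂`. For a subspace `V`, the distance `d(x) = inf_{v ∈ V} ‖x - v‖_{p₂}`
is homogeneous and `d^r` is subadditive, because `‖·‖_{p₂}^r` is. Hence on the unit ball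
of `ℓ_r`, the `r`-convex hull of the `±eᵢ`, `d` is bounded by its values at the `eᵢ`.
Since `p₁ ≤ r`, the unit ball of `ℓ_{p₁}` lies between the `eᵢ` and the unit ball of
`ℓ_r`, so for every `V` both balls give the same supremum of `d`.
-/

open scoped ENNReal BigOperators

/-- The ℓ_p quasi-norm on ℝ^N, for `p : ℝ≥0∞` (with `p = ∞` giving the sup-norm). -/
noncomputable def pNorm (p : ℝ≥0∞) {N : ℕ} (x : Fin N → ℝ) : ℝ :=
  if p = ∞ then ⨆ i, |x i| else (∑ i, |x i| ^ p.toReal) ^ (1 / p.toReal)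

/-- The n-th Kolmogorov number of the identity map `id : ℓ_p^N → ℓ_q^N`. -/
noncomputable def kolmogorovNumber (p q : ℝ≥0∞) (N n : ℕ) : ℝ :=
  sInf { r : ℝ | ∃ V : Submodule ℝ (Fin N → ℝ), Module.finrank ℝ (↥V) < n ∧
    r = sSup { s : ℝ | ∃ x : Fin N → ℝ, pNorm p x ≤ 1 ∧
      s = sInf { t : ℝ | ∃ v ∈ V, t = pNorm q (x - v) } } }

/-- The n-th Gelfand number of the identity map `id : ℓ_p^N → ℓ_q^N`. -/
noncomputable def gelfandNumber (p q : ℝ≥0∞) (N n : ℕ) : ℝ :=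
  sInf { r : ℝ | ∃ M : Submodule ℝ (Fin N → ℝ), N - Module.finrank ℝ (↥M) < n ∧
    r = sSup { s : ℝ | ∃ x ∈ M, pNorm p x ≤ 1 ∧ s = pNorm q x } }

/-- The n-th approximation number of the identity map `id : ℓ_p^N → ℓ_q^N`. -/
noncomputable def approxNumber (p q : ℝ≥0∞) (N n : ℕ) : ℝ :=
  sInf { r : ℝ | ∃ L : (Fin N → ℝ) →ₗ[ℝ] (Fin N → ℝ),
    Module.finrank ℝ (↥(LinearMap.range L)) < n ∧
    r = sSup { s : ℝ | ∃ x : Fin N → ℝ, pNorm p x ≤ 1 ∧ s = pNorm q (x - L x) } }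

theorem sum_rpow_le_rpow_sum {ι : Type*} (s : Finset ι) {c : ι → ℝ} (hc : ∀ i ∈ s, 0 ≤ c i)
    {t : ℝ} (ht : 1 ≤ t) : ∑ i ∈ s, c i ^ t ≤ (∑ i ∈ s, c i) ^ t := by
  have hsplit : ∀ a : ℝ, 0 ≤ a → a ^ t = a * a ^ (t - 1) := fun a ha => by
    conv_lhs => rw [show t = 1 + (t - 1) by ring]
    rw [Real.rpow_add' ha (by linarith), Real.rpow_one]
  calc ∑ i ∈ s, c i ^ t = ∑ i ∈ s, c i * c i ^ (t - 1) :=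
        Finset.sum_congr rfl fun i hi => hsplit _ (hc i hi)
    _ ≤ ∑ i ∈ s, c i * (∑ j ∈ s, c j) ^ (t - 1) := by
        gcongr with i hi
        · exact hc i hi
        · exact hc i hi
        · exact Finset.single_le_sum hc hi
    _ = (∑ i ∈ s, c i) ^ t := by rw [← Finset.sum_mul, hsplit _ (Finset.sum_nonneg hc)]

theorem apply_le_of_sum_abs_rpow_le_one {ι : Type*} [Fintype ι] [DecidableEq ι]
    {f : (ι → ℝ) → ℝ} {r M : ℝ} (hr : 0 < r) (hf : ∀ x, 0 ≤ f x)
    (hsmul : ∀ (c : ℝ) x, f (c • x) ≤ |c| * f x)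
    (hadd : ∀ x y, f (x + y) ^ r ≤ f x ^ r + f y ^ r)
    (hM : 0 ≤ M) (hsingle : ∀ i, f (Pi.single i 1) ≤ M)
    {x : ι → ℝ} (hx : ∑ i, |x i| ^ r ≤ 1) : f x ≤ M := by
  have hzero : f 0 ^ r = 0 := by
    have : f 0 ≤ 0 := by simpa using hsmul 0 0
    rw [le_antisymm this (hf 0), Real.zero_rpow hr.ne']
  have hx_sum : x = ∑ i, x i • (Pi.single i 1 : ι → ℝ) := by
    simp_rw [← Pi.single_smul', smul_eq_mul, mul_one, Finset.univ_sum_single]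
  rw [← Real.rpow_le_rpow_iff (hf x) hM hr]
  calc f x ^ r ≤ ∑ i, f (x i • Pi.single i 1) ^ r := by
        conv_lhs => rw [hx_sum]
        exact Finset.le_sum_of_subadditive (f ^ r) hzero.le hadd _ _
    _ ≤ ∑ i, |x i| ^ r * M ^ r := by
        gcongr with i
        rw [← Real.mul_rpow (abs_nonneg _) hM]
        gcongr
        · exact hf _
        · exact (hsmul _ _).trans (by gcongr; exact hsingle i)
    _ = (∑ i, |x i| ^ r) * M ^ r := (Finset.sum_mul ..).symm
    _ ≤ M ^ r := mul_le_of_le_one_left (by positivity) hx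

section PNorm

variable {N : ℕ}

theorem pNorm_nonneg (p : ℝ≥0∞) (x : Fin N → ℝ) : 0 ≤ pNorm p x := by
  unfold pNorm
  split_ifs
  · exact Real.iSup_nonneg fun i => abs_nonneg _
  · positivity

theorem pNorm_top (x : Fin N → ℝ) : pNorm ∞ x = ⨆ i, |x i| := if_pos rfl

theorem pNorm_of_ne_top {p : ℝ≥0∞} (hp : p ≠ ∞) (x : Fin N → ℝ) :
    pNorm p x = (∑ i, |x i| ^ p.toReal) ^ (1 / p.toReal) := if_neg hp

theorem pNorm_rpow_toReal {p : ℝ≥0∞} (hp₀ : p ≠ 0) (hp : p ≠ ∞) (x : Fin N → ℝ) :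
    pNorm p x ^ p.toReal = ∑ i, |x i| ^ p.toReal := by
  rw [pNorm_of_ne_top hp, one_div,
    Real.rpow_inv_rpow (by positivity) (ENNReal.toReal_pos hp₀ hp).ne']

theorem pNorm_smul {p : ℝ≥0∞} (hp : p ≠ 0) (c : ℝ) (x : Fin N → ℝ) :
    pNorm p (c • x) = |c| * pNorm p x := by
  rcases eq_or_ne p ∞ with rfl | hp'
  · simp only [pNorm_top, Pi.smul_apply, smul_eq_mul, abs_mul]
    exact (Real.mul_iSup_of_nonneg (abs_nonneg c) _).symm
  · have hp₀ := (ENNReal.toReal_pos hp hp').ne'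
    simp only [pNorm_of_ne_top hp', Pi.smul_apply, smul_eq_mul, abs_mul,
      Real.mul_rpow (abs_nonneg _) (abs_nonneg _), ← Finset.mul_sum]
    rw [Real.mul_rpow (by positivity) (by positivity), ← Real.rpow_mul (abs_nonneg c),
      mul_one_div_cancel hp₀, Real.rpow_one]

theorem pNorm_zero {p : ℝ≥0∞} (hp : p ≠ 0) : pNorm p (0 : Fin N → ℝ) = 0 := by
  simpa using pNorm_smul hp 0 (0 : Fin N → ℝ)

theorem abs_le_pNorm {p : ℝ≥0∞} (hp : p ≠ 0) (x : Fin N → ℝ) (i : Fin N) :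
    |x i| ≤ pNorm p x := by
  rcases eq_or_ne p ∞ with rfl | hp'
  · rw [pNorm_top]
    exact le_ciSup (Set.finite_range fun j => |x j|).bddAbove i
  · rw [← Real.rpow_le_rpow_iff (abs_nonneg _) (pNorm_nonneg p x) (ENNReal.toReal_pos hp hp'),
      pNorm_rpow_toReal hp hp']
    exact Finset.single_le_sum (f := fun j => |x j| ^ p.toReal) (fun j _ => by positivity)
      (Finset.mem_univ i)

theorem pNorm_single_one {p : ℝ≥0∞} (hp₀ : p ≠ 0) (hp : p ≠ ∞) (i : Fin N) :
    pNorm p (Pi.single i 1 : Fin N → ℝ) = 1 := by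
  have hp' := (ENNReal.toReal_pos hp₀ hp).ne'
  simp [pNorm_of_ne_top hp, Pi.single_apply, apply_ite, Real.zero_rpow hp']

theorem pNorm_le_pNorm_of_le {p q : ℝ≥0∞} (hp : p ≠ 0) (hpq : p ≤ q) (x : Fin N → ℝ) :
    pNorm q x ≤ pNorm p x := by
  rcases eq_or_ne q ∞ with rfl | hq
  · rw [pNorm_top]
    exact Real.iSup_le (abs_le_pNorm hp x) (pNorm_nonneg p x)
  have hp' : p ≠ ∞ := ne_top_of_le_ne_top hq hpq
  have hp₀ := ENNReal.toReal_pos hp hp'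
  have hpq' : p.toReal ≤ q.toReal := ENNReal.toReal_mono hq hpq
  rw [← Real.rpow_le_rpow_iff (pNorm_nonneg q x) (pNorm_nonneg p x) (hp₀.trans_le hpq'),
    pNorm_rpow_toReal (pos_of_ne_zero hp |>.trans_le hpq).ne' hq]
  calc ∑ i, |x i| ^ q.toReal = ∑ i, (|x i| ^ p.toReal) ^ (q.toReal / p.toReal) := by
        congr! 1 with i
        rw [← Real.rpow_mul (abs_nonneg _), mul_div_cancel₀ _ hp₀.ne']
    _ ≤ (∑ i, |x i| ^ p.toReal) ^ (q.toReal / p.toReal) :=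
        sum_rpow_le_rpow_sum _ (fun i _ => by positivity) ((one_le_div hp₀).2 hpq')
    _ = pNorm p x ^ q.toReal := by
        rw [← pNorm_rpow_toReal hp hp', ← Real.rpow_mul (pNorm_nonneg p x),
          mul_div_cancel₀ _ hp₀.ne']

theorem pNorm_add_le {p : ℝ≥0∞} (hp : 1 ≤ p) (x y : Fin N → ℝ) :
    pNorm p (x + y) ≤ pNorm p x + pNorm p y := by
  have hp₀ : p ≠ 0 := (zero_lt_one.trans_le hp).ne'
  rcases eq_or_ne p ∞ with rfl | hp'
  · rw [pNorm_top]
    exact Real.iSup_le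
      (fun i => (abs_add_le _ _).trans
        (add_le_add (abs_le_pNorm hp₀ x i) (abs_le_pNorm hp₀ y i)))
      (add_nonneg (pNorm_nonneg _ x) (pNorm_nonneg _ y))
  · simp only [pNorm_of_ne_top hp', Pi.add_apply]
    exact Real.Lp_add_le _ x y (by simpa using ENNReal.toReal_mono hp' hp)

theorem pNorm_add_rpow_le {p : ℝ≥0∞} (hp : p ≠ 0) (x y : Fin N → ℝ) :
    pNorm p (x + y) ^ (min 1 p).toReal ≤
      pNorm p x ^ (min 1 p).toReal + pNorm p y ^ (min 1 p).toReal := by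
  rcases le_total 1 p with h1 | h1
  · simpa only [min_eq_left h1, ENNReal.toReal_one, Real.rpow_one] using pNorm_add_le h1 x y
  have hp' : p ≠ ∞ := ne_top_of_le_ne_top ENNReal.one_ne_top h1
  have hp₀ := ENNReal.toReal_pos hp hp'
  have hp₁ : p.toReal ≤ 1 := by simpa using ENNReal.toReal_mono ENNReal.one_ne_top h1
  rw [min_eq_right h1, pNorm_rpow_toReal hp hp', pNorm_rpow_toReal hp hp',
    pNorm_rpow_toReal hp hp', ← Finset.sum_add_distrib]
  gcongr with i
  calc |x i + y i| ^ p.toReal ≤ (|x i| + |y i|) ^ p.toReal := by gcongr; exact abs_add_le _ _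
    _ ≤ |x i| ^ p.toReal + |y i| ^ p.toReal :=
        Real.rpow_add_le_add_rpow (abs_nonneg _) (abs_nonneg _) hp₀.le hp₁

end PNorm

noncomputable def pInfDist (p : ℝ≥0∞) {N : ℕ} (V : Submodule ℝ (Fin N → ℝ)) (x : Fin N → ℝ) :
    ℝ :=
  sInf {t : ℝ | ∃ v ∈ V, t = pNorm p (x - v)}

section PInfDist

variable {N : ℕ} {p : ℝ≥0∞} (V : Submodule ℝ (Fin N → ℝ))

theorem pInfDist_nonneg (x : Fin N → ℝ) : 0 ≤ pInfDist p V x :=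
  le_csInf ⟨_, 0, V.zero_mem, rfl⟩ (by rintro _ ⟨v, -, rfl⟩; exact pNorm_nonneg p _)

theorem pInfDist_le (x : Fin N → ℝ) {v : Fin N → ℝ} (hv : v ∈ V) :
    pInfDist p V x ≤ pNorm p (x - v) :=
  csInf_le ⟨0, by rintro _ ⟨w, -, rfl⟩; exact pNorm_nonneg p _⟩ ⟨v, hv, rfl⟩

theorem pInfDist_le_pNorm (x : Fin N → ℝ) : pInfDist p V x ≤ pNorm p x := by
  simpa using pInfDist_le V x V.zero_mem

theorem pInfDist_zero (hp : p ≠ 0) : pInfDist p V 0 = 0 :=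
  le_antisymm (by simpa [pNorm_zero hp] using pInfDist_le_pNorm V 0 (p := p))
    (pInfDist_nonneg V 0)

theorem le_pInfDist_rpow {x : Fin N → ℝ} {r c : ℝ} (hr : 0 < r)
    (h : ∀ v ∈ V, c ≤ pNorm p (x - v) ^ r) : c ≤ pInfDist p V x ^ r := by
  rcases le_or_gt c 0 with hc | hc
  · exact hc.trans (Real.rpow_nonneg (pInfDist_nonneg V x) r)
  have hroot : c ^ r⁻¹ ≤ pInfDist p V x := by
    refine le_csInf ⟨_, 0, V.zero_mem, rfl⟩ ?_
    rintro _ ⟨v, hv, rfl⟩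
    rw [← Real.rpow_le_rpow_iff (by positivity) (pNorm_nonneg p _) hr,
      Real.rpow_inv_rpow hc.le hr.ne']
    exact h v hv
  calc c = (c ^ r⁻¹) ^ r := (Real.rpow_inv_rpow hc.le hr.ne').symm
    _ ≤ pInfDist p V x ^ r := by gcongr

theorem pInfDist_smul_le (hp : p ≠ 0) (c : ℝ) (x : Fin N → ℝ) :
    pInfDist p V (c • x) ≤ |c| * pInfDist p V x := by
  rcases eq_or_ne c 0 with rfl | hc
  · simpa [pNorm_zero hp] using pInfDist_le_pNorm V ((0 : ℝ) • x) (p := p)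
  have hc' : 0 < |c| := abs_pos.2 hc
  rw [← div_le_iff₀' hc']
  refine le_csInf ⟨_, 0, V.zero_mem, rfl⟩ ?_
  rintro _ ⟨v, hv, rfl⟩
  rw [div_le_iff₀' hc', ← pNorm_smul hp, smul_sub]
  exact pInfDist_le V _ (V.smul_mem c hv)

theorem pInfDist_add_rpow_le (hp : p ≠ 0) (x y : Fin N → ℝ) :
    pInfDist p V (x + y) ^ (min 1 p).toReal ≤
      pInfDist p V x ^ (min 1 p).toReal + pInfDist p V y ^ (min 1 p).toReal := by
  set r := (min 1 p).toReal
  have hr : 0 < r := ENNReal.toReal_pos (by simp [hp]) (by simp)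
  have hvw : ∀ v ∈ V, ∀ w ∈ V,
      pInfDist p V (x + y) ^ r ≤ pNorm p (x - v) ^ r + pNorm p (y - w) ^ r := by
    intro v hv w hw
    calc pInfDist p V (x + y) ^ r ≤ pNorm p (x + y - (v + w)) ^ r := by
          gcongr
          · exact pInfDist_nonneg V _
          · exact pInfDist_le V _ (V.add_mem hv hw)
      _ = pNorm p (x - v + (y - w)) ^ r := by rw [add_sub_add_comm]
      _ ≤ pNorm p (x - v) ^ r + pNorm p (y - w) ^ r := pNorm_add_rpow_le hp _ _
  have hx_part : ∀ w ∈ V,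
      pInfDist p V (x + y) ^ r - pNorm p (y - w) ^ r ≤ pInfDist p V x ^ r :=
    fun w hw => le_pInfDist_rpow V hr fun v hv => by linarith [hvw v hv w hw]
  have hy_part : pInfDist p V (x + y) ^ r - pInfDist p V x ^ r ≤ pInfDist p V y ^ r :=
    le_pInfDist_rpow V hr fun w hw => by linarith [hx_part w hw]
  linarith

end PInfDist

theorem sSup_pInfDist_eq_sSup_min_one {N : ℕ} {p q : ℝ≥0∞} (hp : p ≠ 0) (hpq : p ≤ min 1 q)
    (V : Submodule ℝ (Fin N → ℝ)) :
    sSup {s | ∃ x : Fin N → ℝ, pNorm p x ≤ 1 ∧ s = pInfDist q V x} =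
      sSup {s | ∃ x : Fin N → ℝ, pNorm (min 1 q) x ≤ 1 ∧ s = pInfDist q V x} := by
  set r := min 1 q
  have hr : r ≠ 0 := (pos_of_ne_zero hp |>.trans_le hpq).ne'
  have hq : q ≠ 0 := (pos_of_ne_zero hr |>.trans_le (min_le_right 1 q)).ne'
  have hsub : {s | ∃ x : Fin N → ℝ, pNorm p x ≤ 1 ∧ s = pInfDist q V x} ⊆
      {s | ∃ x : Fin N → ℝ, pNorm r x ≤ 1 ∧ s = pInfDist q V x} := by
    rintro _ ⟨x, hx, rfl⟩
    exact ⟨x, (pNorm_le_pNorm_of_le hp hpq x).trans hx, rfl⟩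
  have hbdd : BddAbove {s | ∃ x : Fin N → ℝ, pNorm r x ≤ 1 ∧ s = pInfDist q V x} := by
    refine ⟨1, ?_⟩
    rintro _ ⟨x, hx, rfl⟩
    exact (pInfDist_le_pNorm V x).trans
      ((pNorm_le_pNorm_of_le hr (min_le_right 1 q) x).trans hx)
  have hzero : (0 : ℝ) ∈ {s | ∃ x : Fin N → ℝ, pNorm p x ≤ 1 ∧ s = pInfDist q V x} :=
    ⟨0, by simp [pNorm_zero hp], (pInfDist_zero V hq).symm⟩
  refine le_antisymm (csSup_le_csSup hbdd ⟨0, hzero⟩ hsub) (csSup_le ⟨0, hsub hzero⟩ ?_)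
  rintro _ ⟨x, hx, rfl⟩
  have hp' : p ≠ ∞ := ne_top_of_le_ne_top ENNReal.one_ne_top (hpq.trans (min_le_left 1 q))
  have hr' : r ≠ ∞ := ne_top_of_le_ne_top ENNReal.one_ne_top (min_le_left 1 q)
  have hx' : ∑ i, |x i| ^ r.toReal ≤ 1 := by
    rw [← pNorm_rpow_toReal hr hr']
    exact Real.rpow_le_one (pNorm_nonneg r x) hx ENNReal.toReal_nonneg
  exact apply_le_of_sum_abs_rpow_le_one (ENNReal.toReal_pos hr hr') (pInfDist_nonneg V)
    (pInfDist_smul_le V hq) (pInfDist_add_rpow_le V hq) (le_csSup (hbdd.mono hsub) hzero)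
    (fun i => le_csSup (hbdd.mono hsub) ⟨_, (pNorm_single_one hp hp' i).le, rfl⟩) hx'

/-- For `0 < p₁ < 1` and `p₁ < p₂ ≤ ∞`,
`d_n(id : ℓ_{p₁}^N → ℓ_{p₂}^N) = d_n(id : ℓ_{min(1,p₂)}^N → ℓ_{p₂}^N)`. -/
theorem kolmogorov_small_p_eq (p₁ : ℝ) (p₂ : ℝ≥0∞) (h1 : 0 < p₁) (h2 : p₁ < 1)
    (h3 : ENNReal.ofReal p₁ < p₂) :
    ∀ N n : ℕ, 1 ≤ n →
      kolmogorovNumber (ENNReal.ofReal p₁) p₂ N n =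
        kolmogorovNumber (min 1 p₂) p₂ N n := by
  intro N n _
  have hp₁ : ENNReal.ofReal p₁ ≠ 0 := by simpa using h1
  have hle : ENNReal.ofReal p₁ ≤ min 1 p₂ := le_min (ENNReal.ofReal_le_one.2 h2.le) h3.le
  unfold kolmogorovNumber
  congr 1
  ext d
  exact exists_congr fun V => and_congr_right fun _ =>
    Iff.of_eq (congrArg (d = ·) (sSup_pInfDist_eq_sSup_min_one hp₁ hle V))
end

section
/- Let 0 < p₁ ≤ 1 and p₁ < p₂ ≤ 2. Then there exists a constant C > 0 such that for all n ∈ ℕ, the n-th Gelfand number of the identity map from ℓ_{p₁}^{2n} to ℓ_{p₂}^{2n} satisfies c_n(id : ℓ_{p₁}^{2n} → ℓ_{p₂}^{2n}) ≥ C · n^{1/p₂ − 1/p₁}. -/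
open scoped ENNReal BigOperators

lemma pNorm_ofReal {p : ℝ} (hp : 0 ≤ p) {N : ℕ} (x : Fin N → ℝ) :
    pNorm (ENNReal.ofReal p) x = (∑ i, |x i| ^ p) ^ (1 / p) := by
  simp [pNorm, ENNReal.ofReal_ne_top, ENNReal.toReal_ofReal hp]

lemma qnorm_nonneg {p : ℝ} {N : ℕ} (x : Fin N → ℝ) :
    0 ≤ (∑ i, |x i| ^ p) ^ (1 / p) := by positivity

lemma qsum_pos {p : ℝ} {N : ℕ} {x : Fin N → ℝ} (hx : x ≠ 0) :
    0 < ∑ i, |x i| ^ p := by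
  obtain ⟨i, hi⟩ := Function.ne_iff.mp hx
  refine Finset.sum_pos' (fun j _ => by positivity) ⟨i, Finset.mem_univ i, ?_⟩
  have : 0 < |x i| := abs_pos.mpr hi
  positivity

lemma qnorm_pos {p : ℝ} {N : ℕ} {x : Fin N → ℝ} (hx : x ≠ 0) :
    0 < (∑ i, |x i| ^ p) ^ (1 / p) :=
  Real.rpow_pos_of_pos (qsum_pos hx) _

lemma qnorm_smul {p : ℝ} (hp : 0 < p) {N : ℕ} (c : ℝ) (x : Fin N → ℝ) :
    (∑ i, |(c • x) i| ^ p) ^ (1 / p) = |c| * (∑ i, |x i| ^ p) ^ (1 / p) := by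
  have h1 : ∀ i, |(c • x) i| ^ p = |c| ^ p * |x i| ^ p := by
    intro i
    simp only [Pi.smul_apply, smul_eq_mul, abs_mul]
    exact Real.mul_rpow (abs_nonneg _) (abs_nonneg _)
  simp only [h1, ← Finset.mul_sum]
  rw [Real.mul_rpow (by positivity) (by positivity),
    ← Real.rpow_mul (abs_nonneg c), mul_one_div_cancel hp.ne', Real.rpow_one]

/-- Monotonicity: `‖x‖_{p₂} ≤ 1` whenever `‖x‖_{p₁} ≤ 1` and `p₁ ≤ p₂`. -/
lemma qnorm_mono {p₁ p₂ : ℝ} (hp1 : 0 < p₁) (hle : p₁ ≤ p₂) {N : ℕ} {x : Fin N → ℝ}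
    (hx : (∑ i, |x i| ^ p₁) ^ (1 / p₁) ≤ 1) :
    (∑ i, |x i| ^ p₂) ^ (1 / p₂) ≤ 1 := by
  have hp2 : 0 < p₂ := lt_of_lt_of_le hp1 hle
  have hS1 : (0:ℝ) ≤ ∑ i, |x i| ^ p₁ := by positivity
  have hsum1 : ∑ i, |x i| ^ p₁ ≤ 1 := by
    by_contra h
    push_neg at h
    have : (1:ℝ) < (∑ i, |x i| ^ p₁) ^ (1 / p₁) :=
      Real.one_lt_rpow_iff_of_pos (lt_trans one_pos h) |>.mpr (Or.inl ⟨h, by positivity⟩)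
    linarith
  have habs : ∀ i, |x i| ≤ 1 := by
    intro i
    by_contra h
    push_neg at h
    have h1 : (1:ℝ) < |x i| ^ p₁ :=
      (Real.one_lt_rpow_iff_of_pos (lt_trans one_pos h)).mpr (Or.inl ⟨h, hp1⟩)
    have h2 : |x i| ^ p₁ ≤ ∑ j, |x j| ^ p₁ :=
      Finset.single_le_sum (f := fun j => |x j| ^ p₁) (fun j _ => by positivity)
        (Finset.mem_univ i)
    linarith
  have hterm : ∀ i, |x i| ^ p₂ ≤ |x i| ^ p₁ := by
    intro i
    rcases eq_or_lt_of_le (abs_nonneg (x i)) with h0 | h0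
    · rw [← h0, Real.zero_rpow hp2.ne', Real.zero_rpow hp1.ne']
    · exact Real.rpow_le_rpow_of_exponent_ge h0 (habs i) hle
  have hsum2 : ∑ i, |x i| ^ p₂ ≤ 1 :=
    le_trans (Finset.sum_le_sum fun i _ => hterm i) hsum1
  exact Real.rpow_le_one (by positivity) hsum2 (by positivity)

/-- Hölder-type comparison: `‖x‖_{p₁} ≤ N^{1/p₁-1/p₂} ‖x‖_{p₂}`. -/
lemma qnorm_holder {p₁ p₂ : ℝ} (hp1 : 0 < p₁) (hlt : p₁ < p₂) {N : ℕ} (hN : 0 < N)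
    (x : Fin N → ℝ) :
    (∑ i, |x i| ^ p₁) ^ (1 / p₁) ≤
      (N : ℝ) ^ (1/p₁ - 1/p₂) * (∑ i, |x i| ^ p₂) ^ (1 / p₂) := by
  have hp2 : 0 < p₂ := lt_trans hp1 hlt
  have hNpos : (0:ℝ) < N := by exact_mod_cast hN
  set r : ℝ := p₂ / p₁ with hr_def
  have hr : 1 ≤ r := (one_le_div hp1).mpr hlt.le
  have key := Real.arith_mean_le_rpow_mean Finset.univ (fun _ : Fin N => 1 / (N:ℝ))
    (fun i => |x i| ^ p₁) (fun i _ => by positivity)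
    (by simp [Finset.card_univ]; field_simp) (fun i _ => by positivity) hr
  have hbr : ∀ i : Fin N, (|x i| ^ p₁) ^ r = |x i| ^ p₂ := by
    intro i
    rw [← Real.rpow_mul (abs_nonneg _), mul_div_cancel₀ _ hp1.ne']
  simp only [hbr, ← Finset.mul_sum] at key
  -- key : (1/N) * ∑ |x|^p₁ ≤ ((1/N) * ∑ |x|^p₂) ^ (1/r)
  set S₁ : ℝ := ∑ i, |x i| ^ p₁ with hS₁
  set S₂ : ℝ := ∑ i, |x i| ^ p₂ with hS₂
  have hS₁n : 0 ≤ S₁ := by positivity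
  have hS₂n : 0 ≤ S₂ := by positivity
  have key2 : S₁ ≤ (N:ℝ) ^ (1 - 1/r) * S₂ ^ (1/r) := by
    have h := mul_le_mul_of_nonneg_left key (le_of_lt hNpos)
    rw [Real.mul_rpow (by positivity) hS₂n] at h
    calc S₁ = (N:ℝ) * ((1/(N:ℝ)) * S₁) := by field_simp
    _ ≤ (N:ℝ) * ((1/(N:ℝ)) ^ (1/r) * S₂ ^ (1/r)) := h
    _ = (N:ℝ) ^ (1 - 1/r) * S₂ ^ (1/r) := by
        rw [Real.div_rpow zero_le_one hNpos.le, Real.one_rpow,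
          Real.rpow_sub hNpos, Real.rpow_one]
        field_simp [(Real.rpow_pos_of_pos hNpos (1/r)).ne']
  -- now raise to 1/p₁
  have := Real.rpow_le_rpow hS₁n key2 (le_of_lt (by positivity : (0:ℝ) < 1/p₁))
  rw [Real.mul_rpow (by positivity) (by positivity), ← Real.rpow_mul hNpos.le,
    ← Real.rpow_mul hS₂n] at this
  have e1 : (1 - 1/r) * (1/p₁) = 1/p₁ - 1/p₂ := by
    rw [hr_def, one_div_div]
    field_simp
  have e2 : 1/r * (1/p₁) = 1/p₂ := by
    rw [hr_def, one_div_div]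
    rw [div_mul_div_comm]
    rw [mul_one, mul_comm p₂ p₁, ← div_div, div_self hp1.ne']
  rwa [e1, e2] at this

/-- For `0 < p₁ ≤ 1` and `p₁ < p₂ ≤ 2` there is `C > 0` with
`c_n(id : ℓ_{p₁}^{2n} → ℓ_{p₂}^{2n}) ≥ C·n^{1/p₂ - 1/p₁}` for all `n`. -/
theorem gelfand_lower_small_p2 (p₁ p₂ : ℝ) (h1 : 0 < p₁) (h2 : p₁ ≤ 1)
    (h3 : p₁ < p₂) (h4 : p₂ ≤ 2) :
    ∃ C : ℝ, 0 < C ∧ ∀ n : ℕ,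
      C * (n : ℝ) ^ (1/p₂ - 1/p₁) ≤
        gelfandNumber (ENNReal.ofReal p₁) (ENNReal.ofReal p₂) (2 * n) n := by
  have hp2 : 0 < p₂ := lt_trans h1 h3
  have he : 1/p₂ - 1/p₁ < 0 := by
    have := one_div_lt_one_div_of_lt h1 h3
    linarith
  refine ⟨(2:ℝ) ^ (1/p₂ - 1/p₁), Real.rpow_pos_of_pos two_pos _, fun n => ?_⟩
  rcases Nat.eq_zero_or_pos n with hn | hn
  · subst hn
    rw [Nat.cast_zero, Real.zero_rpow he.ne, mul_zero]
    have hset : { r : ℝ | ∃ M : Submodule ℝ (Fin (2*0) → ℝ),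
        2*0 - Module.finrank ℝ (↥M) < 0 ∧
        r = sSup { s : ℝ | ∃ x ∈ M, pNorm (ENNReal.ofReal p₁) x ≤ 1 ∧
          s = pNorm (ENNReal.ofReal p₂) x } } = ∅ := by
      ext r; simp
    rw [gelfandNumber, hset, Real.sInf_empty]
  · rw [gelfandNumber]
    apply le_csInf
    · refine ⟨_, ⊤, ?_, rfl⟩
      rw [finrank_top, Module.finrank_fin_fun]
      omega
    · rintro r ⟨M, hM, rfl⟩
      have hfr : Module.finrank ℝ M ≤ 2*n := by
        have := Submodule.finrank_le M
        rwa [Module.finrank_fin_fun] at this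
      have hd : n < Module.finrank ℝ M := by omega
      have hMne : M ≠ ⊥ := by
        intro h; rw [h, finrank_bot] at hd; omega
      obtain ⟨x, hxM, hx0⟩ := Submodule.exists_mem_ne_zero_of_ne_bot hMne
      set a := (∑ i, |x i| ^ p₁) ^ (1/p₁) with ha
      have hapos : 0 < a := qnorm_pos hx0
      set y := a⁻¹ • x with hy
      have hyM : y ∈ M := M.smul_mem _ hxM
      have hy1 : pNorm (ENNReal.ofReal p₁) y = 1 := by
        rw [pNorm_ofReal h1.le, hy, qnorm_smul h1, abs_of_pos (inv_pos.mpr hapos),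
          ← ha, inv_mul_cancel₀ hapos.ne']
      have hN : 0 < 2*n := by omega
      have hNc : (0:ℝ) < ((2*n : ℕ):ℝ) := by exact_mod_cast hN
      have hol := qnorm_holder h1 h3 hN y
      have hy2 : pNorm (ENNReal.ofReal p₂) y = (∑ i, |y i| ^ p₂) ^ (1/p₂) :=
        pNorm_ofReal hp2.le y
      have h1' : (1:ℝ) ≤ ((2*n:ℕ):ℝ) ^ (1/p₁ - 1/p₂) * pNorm (ENNReal.ofReal p₂) y := by
        rw [hy2]
        rw [pNorm_ofReal h1.le] at hy1
        rw [hy1] at hol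
        exact hol
      have hc : (0:ℝ) < ((2*n:ℕ):ℝ) ^ (1/p₂ - 1/p₁) := Real.rpow_pos_of_pos hNc _
      have key : ((2*n:ℕ):ℝ) ^ (1/p₂ - 1/p₁) ≤ pNorm (ENNReal.ofReal p₂) y := by
        calc ((2*n:ℕ):ℝ) ^ (1/p₂ - 1/p₁) = ((2*n:ℕ):ℝ) ^ (1/p₂ - 1/p₁) * 1 :=
              (mul_one _).symm
        _ ≤ ((2*n:ℕ):ℝ) ^ (1/p₂ - 1/p₁) *
              (((2*n:ℕ):ℝ) ^ (1/p₁ - 1/p₂) * pNorm (ENNReal.ofReal p₂) y) :=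
              mul_le_mul_of_nonneg_left h1' hc.le
        _ = pNorm (ENNReal.ofReal p₂) y := by
              rw [← mul_assoc, ← Real.rpow_add hNc]
              have : (1/p₂ - 1/p₁) + (1/p₁ - 1/p₂) = 0 := by ring
              rw [this, Real.rpow_zero, one_mul]
      have hbdd : BddAbove {s : ℝ | ∃ z ∈ M, pNorm (ENNReal.ofReal p₁) z ≤ 1 ∧
          s = pNorm (ENNReal.ofReal p₂) z} := by
        refine ⟨1, ?_⟩
        rintro s ⟨z, hzM, hz1, rfl⟩
        rw [pNorm_ofReal hp2.le]
        rw [pNorm_ofReal h1.le] at hz1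
        exact qnorm_mono h1 h3.le hz1
      have hmem : pNorm (ENNReal.ofReal p₂) y ∈ {s : ℝ | ∃ z ∈ M,
          pNorm (ENNReal.ofReal p₁) z ≤ 1 ∧ s = pNorm (ENNReal.ofReal p₂) z} :=
        ⟨y, hyM, hy1.le, rfl⟩
      have hle := le_csSup hbdd hmem
      have hfinal : (2:ℝ) ^ (1/p₂-1/p₁) * (n:ℝ) ^ (1/p₂-1/p₁) = ((2*n:ℕ):ℝ) ^ (1/p₂-1/p₁) := by
        push_cast
        rw [← Real.mul_rpow (by norm_num) (Nat.cast_nonneg n)]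
      rw [hfinal]
      exact le_trans key hle
end

section
/- Let 0 < p ≤ 1. Then there exists a constant C > 0, independent of n, such that for every n ∈ ℕ the n-th approximation number of the identity map from ℓ_p^{2n} to ℓ_∞^{2n} satisfies a_n(id : ℓ_p^{2n} → ℓ_∞^{2n}) ≥ C · n^{-1/2}. -/
open scoped ENNReal BigOperators

/-!
A map `L` of rank `< n` with `‖e_j - L e_j‖_∞ < ε` for all unit vectors `e_j` of `ℝ^{2n}` has a
matrix `A` with `|δᵢⱼ - Aᵢⱼ| < ε`. Then `tr A ≥ 2n(1 - ε)`, whereas, writing `P` for the orthogonal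
projection onto the range of `A`, Cauchy–Schwarz gives
`tr A = tr (P A) ≤ ‖P‖_HS ‖A‖_HS = √(rank A) ‖A‖_HS ≤ √n · √(2n(1 + 2ε) + 4n²ε²)`.
For `ε = n^{-1/2}/10` these bounds are incompatible; the unit vectors have `ℓ_p`-norm `1`, so they
are admissible test vectors.
-/

open Module Finset
open scoped InnerProductSpace

theorem LinearMap.trace_sq_le_finrank_range_mul_sum_norm_sq {E ι : Type*}
    [NormedAddCommGroup E] [InnerProductSpace ℝ E] [Fintype ι]
    (b : OrthonormalBasis ι ℝ E) (T : E →ₗ[ℝ] E) :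
    trace ℝ E T ^ 2 ≤ finrank ℝ (range T) * ∑ i, ‖T (b i)‖ ^ 2 := by
  have : FiniteDimensional ℝ E := b.toBasis.finiteDimensional_of_finite
  set P := (range T).starProjection
  have hP : IsProj (range T) (P : E →ₗ[ℝ] E) :=
    ⟨fun x => (range T).starProjection_apply_mem x,
      fun x hx => (range T).starProjection_eq_self_iff.mpr hx⟩
  have htrP : ∑ i, ‖P (b i)‖ ^ 2 = finrank ℝ (range T) := by
    rw [← hP.trace, trace_eq_sum_inner _ b]
    refine sum_congr rfl fun i _ => ?_
    rw [← real_inner_self_eq_norm_sq, (range T).inner_starProjection_left_eq_right,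
      (range T).starProjection_eq_self_iff.mpr ((range T).starProjection_apply_mem _)]
    rfl
  have htr : trace ℝ E T = ∑ i, ⟪P (b i), T (b i)⟫_ℝ := by
    rw [trace_eq_sum_inner _ b]
    refine sum_congr rfl fun i _ => ?_
    rw [(range T).inner_starProjection_left_eq_right,
      (range T).starProjection_eq_self_iff.mpr (mem_range_self T _)]
  calc trace ℝ E T ^ 2 ≤ (∑ i, ‖P (b i)‖ * ‖T (b i)‖) ^ 2 := by
        rw [htr, ← sq_abs]
        gcongr
        exact (abs_sum_le_sum_abs _ _).trans
          (sum_le_sum fun i _ => abs_real_inner_le_norm _ _)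
    _ ≤ (∑ i, ‖P (b i)‖ ^ 2) * ∑ i, ‖T (b i)‖ ^ 2 := sum_mul_sq_le_sq_mul_sq _ _ _
    _ = _ := by rw [htrP]

theorem Matrix.trace_sq_le_rank_mul_sum_sq {ι : Type*} [Fintype ι] [DecidableEq ι]
    (A : Matrix ι ι ℝ) : A.trace ^ 2 ≤ A.rank * ∑ i, ∑ j, A i j ^ 2 := by
  have h := (toEuclideanLin A).trace_sq_le_finrank_range_mul_sum_norm_sq
    (EuclideanSpace.basisFun ι ℝ)
  have hT : toEuclideanLin A = toLin (EuclideanSpace.basisFun ι ℝ).toBasis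
      (EuclideanSpace.basisFun ι ℝ).toBasis A := rfl
  rw [hT, trace_toLin_eq, ← rank_eq_finrank_range_toLin, ← hT] at h
  rw [sum_comm]
  convert h using 4 with j
  rw [EuclideanSpace.norm_sq_eq]
  simp

namespace Matrix

variable {ι : Type*} [Fintype ι] [DecidableEq ι]

theorem card_mul_one_sub_le_trace {A : Matrix ι ι ℝ} {ε : ℝ} (hA : ∀ i j, |(1 - A) i j| ≤ ε) :
    Fintype.card ι * (1 - ε) ≤ A.trace := by
  calc Fintype.card ι * (1 - ε) = ∑ _i : ι, (1 - ε) := by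
        rw [sum_const, card_univ, nsmul_eq_mul]
    _ ≤ ∑ i, A i i := sum_le_sum fun i _ => by
        have := (abs_le.mp (hA i i)).2
        simp only [sub_apply, one_apply_eq] at this
        linarith

theorem sum_sq_le_of_abs_one_sub_le {A : Matrix ι ι ℝ} {ε : ℝ} (hA : ∀ i j, |(1 - A) i j| ≤ ε) :
    ∑ i, ∑ j, A i j ^ 2 ≤ Fintype.card ι * (1 + 2 * ε) + Fintype.card ι ^ 2 * ε ^ 2 := by
  have hentry : ∀ i j, A i j ^ 2 ≤ (1 : Matrix ι ι ℝ) i j * (1 + 2 * ε) + ε ^ 2 := by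
    intro i j
    have habs : |A i j| ≤ (1 : Matrix ι ι ℝ) i j + ε := by
      have h := abs_le.mp (hA i j)
      rw [sub_apply] at h
      have h1 : 0 ≤ (1 : Matrix ι ι ℝ) i j := by rw [one_apply]; split_ifs <;> norm_num
      rw [abs_le]
      constructor <;> linarith [h.1, h.2]
    calc A i j ^ 2 = |A i j| ^ 2 := (sq_abs _).symm
      _ ≤ ((1 : Matrix ι ι ℝ) i j + ε) ^ 2 := pow_le_pow_left₀ (abs_nonneg _) habs 2
      _ = _ := by rw [one_apply]; split_ifs <;> ring
  calc ∑ i, ∑ j, A i j ^ 2 ≤ ∑ i, ∑ j, ((1 : Matrix ι ι ℝ) i j * (1 + 2 * ε) + ε ^ 2) :=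
        sum_le_sum fun i _ => sum_le_sum fun j _ => hentry i j
    _ = _ := by simp [one_apply, sum_add_distrib]; ring

theorem sq_card_mul_one_sub_le_rank_mul {A : Matrix ι ι ℝ} {ε : ℝ} (hε : ε ≤ 1)
    (hA : ∀ i j, |(1 - A) i j| ≤ ε) :
    (Fintype.card ι * (1 - ε)) ^ 2 ≤
      A.rank * (Fintype.card ι * (1 + 2 * ε) + Fintype.card ι ^ 2 * ε ^ 2) :=
  calc (Fintype.card ι * (1 - ε)) ^ 2 ≤ A.trace ^ 2 :=
        pow_le_pow_left₀ (by have := sub_nonneg.mpr hε; positivity)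
          (card_mul_one_sub_le_trace hA) 2
    _ ≤ A.rank * ∑ i, ∑ j, A i j ^ 2 := A.trace_sq_le_rank_mul_sum_sq
    _ ≤ _ := by gcongr; exact sum_sq_le_of_abs_one_sub_le hA

theorem exists_le_abs_one_sub_apply_of_rank_le {n : ℕ} (hn : 0 < n) (A : Matrix ι ι ℝ)
    (hrank : A.rank ≤ n) (hcard : 2 * n ≤ Fintype.card ι) :
    ∃ i j, 1 / 10 * (n : ℝ) ^ (-(1 / 2) : ℝ) ≤ |(1 - A) i j| := by
  by_contra! hA
  set ε : ℝ := 1 / 10 * (n : ℝ) ^ (-(1 / 2) : ℝ) with hε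
  have hn1 : (1 : ℝ) ≤ n := by exact_mod_cast hn
  have hε0 : 0 ≤ ε := by positivity
  have hε1 : ε ≤ 1 / 10 := by
    have : (n : ℝ) ^ (-(1 / 2) : ℝ) ≤ 1 := Real.rpow_le_one_of_one_le_of_nonpos hn1 (by norm_num)
    linarith [hε]
  have hnε : n * ε ^ 2 = 1 / 100 := by
    rw [mul_pow, ← Real.rpow_mul_natCast (by positivity)]
    norm_num [Real.rpow_neg_one]
    field_simp
  have key := sq_card_mul_one_sub_le_rank_mul (by linarith) fun i j => (hA i j).le
  have hN : (2 * n : ℝ) ≤ Fintype.card ι := by exact_mod_cast hcard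
  have hr : (A.rank : ℝ) ≤ n := by exact_mod_cast hrank
  set N : ℝ := (Fintype.card ι : ℝ)
  have hN0 : 0 < N := by linarith
  have hsq : N ^ 2 * (1 - ε) ^ 2 ≤ N * (n * (1 + 2 * ε)) + N ^ 2 * (n * ε ^ 2) :=
    calc N ^ 2 * (1 - ε) ^ 2 = (N * (1 - ε)) ^ 2 := by ring
      _ ≤ A.rank * (N * (1 + 2 * ε) + N ^ 2 * ε ^ 2) := key
      _ ≤ n * (N * (1 + 2 * ε) + N ^ 2 * ε ^ 2) := by gcongr
      _ = N * (n * (1 + 2 * ε)) + N ^ 2 * (n * ε ^ 2) := by ring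
  rw [hnε] at hsq
  have hlin : N * ((1 - ε) ^ 2 - 1 / 100) ≤ n * (1 + 2 * ε) :=
    le_of_mul_le_mul_left (by linarith) hN0
  have hlow : 4 / 5 ≤ (1 - ε) ^ 2 - 1 / 100 := by nlinarith
  linarith [mul_le_mul_of_nonneg_left hlow hN0.le,
    mul_le_mul_of_nonneg_left hε1 (Nat.cast_nonneg (α := ℝ) n)]

end Matrix

theorem pNorm_top_eq_norm {N : ℕ} (x : Fin N → ℝ) : pNorm ∞ x = ‖x‖ := by
  rw [pNorm, if_pos rfl]
  refine le_antisymm (Real.iSup_le (fun i => ?_) (norm_nonneg x)) ?_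
  · rw [← Real.norm_eq_abs]
    exact norm_le_pi_norm x i
  · refine (pi_norm_le_iff_of_nonneg (Real.iSup_nonneg fun i => abs_nonneg _)).2 fun i => ?_
    exact le_ciSup (Set.finite_range fun k => |x k|).bddAbove i

theorem norm_le_pNorm_ofReal {p : ℝ} (hp : 0 < p) {N : ℕ} (x : Fin N → ℝ) :
    ‖x‖ ≤ pNorm (ENNReal.ofReal p) x := by
  rw [pNorm, if_neg ENNReal.ofReal_ne_top, ENNReal.toReal_ofReal hp.le]
  refine (pi_norm_le_iff_of_nonneg (by positivity)).2 fun i => ?_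
  calc ‖x i‖ = (|x i| ^ p) ^ (1 / p) := by
        rw [one_div, Real.rpow_rpow_inv (abs_nonneg _) hp.ne', Real.norm_eq_abs]
    _ ≤ (∑ k, |x k| ^ p) ^ (1 / p) := by
        gcongr
        exact single_le_sum (f := fun k => |x k| ^ p) (fun k _ => by positivity) (mem_univ i)

theorem pNorm_ofReal_single {p : ℝ} (hp : 0 < p) {N : ℕ} (j : Fin N) :
    pNorm (ENNReal.ofReal p) (Pi.single j 1) = 1 := by
  rw [pNorm, if_neg ENNReal.ofReal_ne_top, ENNReal.toReal_ofReal hp.le, sum_eq_single j]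
  · simp
  · intro i _ hij
    simp [hij, Real.zero_rpow hp.ne']
  · simp

theorem approxNumber_zero (p q : ℝ≥0∞) (N : ℕ) : approxNumber p q N 0 = 0 := by
  simp [approxNumber]

theorem le_approxNumber_of_forall_rank_lt {p : ℝ} (hp : 0 < p) {N n : ℕ} (hn : 0 < n) {c : ℝ}
    (h : ∀ A : Matrix (Fin N) (Fin N) ℝ, A.rank < n → ∃ i j, c ≤ |(1 - A) i j|) :
    c ≤ approxNumber (ENNReal.ofReal p) ∞ N n := by
  refine le_csInf ⟨_, 0, by rwa [LinearMap.range_zero, finrank_bot], rfl⟩ ?_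
  rintro _ ⟨L, hL, rfl⟩
  obtain ⟨i, j, hc⟩ := h (LinearMap.toMatrix' L) (by
    rwa [Matrix.rank, ← Matrix.toLin'_apply', Matrix.toLin'_toMatrix'])
  have hbdd : BddAbove
      {s | ∃ x, pNorm (ENNReal.ofReal p) x ≤ 1 ∧ s = pNorm ∞ (x - L x)} := by
    set L' := LinearMap.toContinuousLinearMap L
    refine ⟨1 + ‖L'‖, ?_⟩
    rintro _ ⟨x, hx, rfl⟩
    have hx1 : ‖x‖ ≤ 1 := (norm_le_pNorm_ofReal hp x).trans hx
    rw [pNorm_top_eq_norm]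
    calc ‖x - L x‖ ≤ ‖x‖ + ‖L' x‖ := norm_sub_le _ _
      _ ≤ 1 + ‖L'‖ := add_le_add hx1 ((L'.le_opNorm_of_le hx1).trans_eq (mul_one _))
  calc c ≤ |(1 - LinearMap.toMatrix' L) i j| := hc
    _ = ‖(Pi.single j 1 - L (Pi.single j 1) : Fin N → ℝ) i‖ := by
        simp [LinearMap.toMatrix'_apply, Matrix.one_apply, Pi.single_apply]
    _ ≤ pNorm ∞ (Pi.single j 1 - L (Pi.single j 1)) := by
        rw [pNorm_top_eq_norm]
        exact norm_le_pi_norm _ i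
    _ ≤ _ := le_csSup hbdd ⟨_, (pNorm_ofReal_single hp j).le, rfl⟩

theorem approx_lp_linfty_lower_general (p : ℝ) (h1 : 0 < p) :
    ∃ C : ℝ, 0 < C ∧ ∀ n : ℕ,
      C * (n : ℝ) ^ (-(1/2) : ℝ) ≤ approxNumber (ENNReal.ofReal p) ∞ (2 * n) n := by
  refine ⟨1 / 10, by norm_num, fun n => ?_⟩
  rcases n.eq_zero_or_pos with rfl | hn
  · simp [approxNumber_zero, Real.zero_rpow]
  · exact le_approxNumber_of_forall_rank_lt h1 hn fun A hA =>
      A.exists_le_abs_one_sub_apply_of_rank_le hn hA.le (by simp)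

/-- For `0 < p ≤ 1` there is `C > 0` with
`a_n(id : ℓ_p^{2n} → ℓ_∞^{2n}) ≥ C·n^{-1/2}` for all `n`. -/
theorem approx_lp_linfty_lower (p : ℝ) (h1 : 0 < p) (h2 : p ≤ 1) :
    ∃ C : ℝ, 0 < C ∧ ∀ n : ℕ,
      C * (n : ℝ) ^ (-(1/2) : ℝ) ≤ approxNumber (ENNReal.ofReal p) ∞ (2 * n) n :=
  approx_lp_linfty_lower_general p h1
end

section
/- Let 0 < p₁ ≤ 1 and 0 < λ < 1, and set h = 2(1−λ). Then there exists a constant C > 0 such that for every N ∈ ℕ, sup_{n ∈ ℕ} n^{1/h} · a_n(id : ℓ_{p₁}^N → ℓ_∞^N) ≤ C · N^{λ/(2(1−λ))}, where a_n denotes the n-th approximation number. -/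
open scoped ENNReal BigOperators

/-! Since `‖x‖₁ ≤ ‖x‖_{p₁}` for `p₁ ≤ 1`, the number `a_n` is at most the entrywise distance
from the identity to any matrix of rank `< n`. Index the `N` coordinates by distinct polynomials
of degree `< k` over a field with `q` elements, `q² < n`: the matrix `#{x | P x = Q x} / q` has
rank at most `q²` (it is a Gram matrix of graph incidence vectors in `ℝ^{F × F}`), unit diagonal,
and off-diagonal entries `< k / q`, since distinct such polynomials agree in fewer than `k`
points. With a prime `q ≍ √n` (Bertrand) this gives `a_n ≲ k / √n` as long as `N ≤ q^k`;
otherwise `n ≲ N^{2/k}`, and the trivial bound `a_n ≤ 1` suffices once `k ≥ 2 / λ`. -/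

open Finset Matrix Polynomial

lemma sum_abs_le_one_of_pNorm_le_one {p : ℝ} (hp0 : 0 < p) (hp1 : p ≤ 1) {N : ℕ}
    {x : Fin N → ℝ} (hx : pNorm (ENNReal.ofReal p) x ≤ 1) : ∑ i, |x i| ≤ 1 := by
  have hsum : ∑ i, |x i| ^ p ≤ 1 := by
    simp only [pNorm, ENNReal.ofReal_ne_top, if_false, ENNReal.toReal_ofReal hp0.le,
      one_div] at hx
    simpa using (Real.rpow_inv_le_iff_of_pos (by positivity) zero_le_one hp0).1 hx
  refine le_trans (sum_le_sum fun i _ => ?_) hsum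
  have hxi : |x i| ^ p ≤ 1 := le_trans (single_le_sum (f := fun j => |x j| ^ p)
    (fun j _ => by positivity) (mem_univ i)) hsum
  have hxi1 : |x i| ≤ 1 := by
    by_contra! h
    exact absurd hxi (not_le.2 (Real.one_lt_rpow h hp0))
  simpa using Real.rpow_le_rpow_of_exponent_ge' (abs_nonneg _) hxi1 hp0.le hp1

lemma pNorm_top_mulVec_le {N : ℕ} {A : Matrix (Fin N) (Fin N) ℝ} {ε : ℝ} (hε : 0 ≤ ε)
    (hA : ∀ i j, |A i j| ≤ ε) {x : Fin N → ℝ} (hx : ∑ j, |x j| ≤ 1) :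
    pNorm ∞ (A *ᵥ x) ≤ ε := by
  simp only [pNorm]
  refine Real.iSup_le (fun i => ?_) hε
  calc |(A *ᵥ x) i| ≤ ∑ j, |A i j * x j| :=
        abs_sum_le_sum_abs (fun j => A i j * x j) univ
    _ = ∑ j, |A i j| * |x j| := by simp only [abs_mul]
    _ ≤ ∑ j, ε * |x j| := by gcongr with j; exact hA i j
    _ = ε * ∑ j, |x j| := (mul_sum _ _ _).symm
    _ ≤ ε := mul_le_of_le_one_right hε hx

lemma approxNumber_le_of_rank_lt {p : ℝ} (hp0 : 0 < p) (hp1 : p ≤ 1) {N n : ℕ}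
    (M : Matrix (Fin N) (Fin N) ℝ) (hM : M.rank < n) {ε : ℝ} (hε : 0 ≤ ε)
    (hME : ∀ i j, |(1 - M) i j| ≤ ε) : approxNumber (ENNReal.ofReal p) ∞ N n ≤ ε := by
  refine le_trans (csInf_le ⟨0, ?_⟩ ⟨M.mulVecLin, hM, rfl⟩) (Real.sSup_le ?_ hε)
  · rintro r ⟨L, -, rfl⟩
    refine Real.sSup_nonneg fun s ⟨x, _, hs⟩ => hs ▸ ?_
    simp only [pNorm]
    exact Real.iSup_nonneg fun i => abs_nonneg _
  · rintro s ⟨x, hx, rfl⟩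
    have h1M : x - M.mulVecLin x = (1 - M) *ᵥ x := by simp [sub_mulVec]
    rw [h1M]
    exact pNorm_top_mulVec_le hε hME (sum_abs_le_one_of_pNorm_le_one hp0 hp1 hx)

lemma approxNumber_le_one {p : ℝ} (hp0 : 0 < p) (hp1 : p ≤ 1) {N n : ℕ} (hn : 1 ≤ n) :
    approxNumber (ENNReal.ofReal p) ∞ N n ≤ 1 :=
  approxNumber_le_of_rank_lt hp0 hp1 0 (by rwa [rank_zero]) zero_le_one fun i j => by
    by_cases h : i = j <;> simp [one_apply, h]

lemma approxNumber_nonpos {p : ℝ} (hp0 : 0 < p) (hp1 : p ≤ 1) {N n : ℕ} (hN : N < n) :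
    approxNumber (ENNReal.ofReal p) ∞ N n ≤ 0 :=
  approxNumber_le_of_rank_lt hp0 hp1 1 (by simpa [rank_one] using hN) le_rfl fun i j => by
    simp

def graphMatrix {ι α β : Type*} [DecidableEq β] (f : ι → α → β) : Matrix ι (α × β) ℝ :=
  of fun i a => if f i a.1 = a.2 then 1 else 0

lemma graphMatrix_mul_transpose_apply {ι α β : Type*} [Fintype α] [Fintype β] [DecidableEq β]
    (f : ι → α → β) (i j : ι) :
    (graphMatrix f * (graphMatrix f)ᵀ) i j = #{a | f i a = f j a} := by
  simp [graphMatrix, mul_apply, Fintype.sum_prod_type, eq_comm]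

lemma approxNumber_le_of_card_agree_le {p : ℝ} (hp0 : 0 < p) (hp1 : p ≤ 1) {N n m : ℕ}
    {α β : Type*} [Fintype α] [Nonempty α] [Fintype β] [DecidableEq β]
    (hn : Fintype.card α * Fintype.card β < n) (f : Fin N → α → β)
    (hf : ∀ i j, i ≠ j → #{a | f i a = f j a} ≤ m) :
    approxNumber (ENNReal.ofReal p) ∞ N n ≤ m / Fintype.card α := by
  set G := graphMatrix f
  have hα : (0 : ℝ) < Fintype.card α := by exact_mod_cast Fintype.card_pos
  refine approxNumber_le_of_rank_lt hp0 hp1 (G * ((Fintype.card α : ℝ)⁻¹ • Gᵀ)) ?_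
    (by positivity) fun i j => ?_
  · refine lt_of_le_of_lt ((rank_mul_le_left _ _).trans (rank_le_card_width G)) ?_
    simpa using hn
  rw [Matrix.mul_smul, Matrix.sub_apply, Matrix.smul_apply, graphMatrix_mul_transpose_apply,
    smul_eq_mul]
  rcases eq_or_ne i j with rfl | hij
  · simp only [one_apply_eq, filter_true, card_univ, inv_mul_cancel₀ hα.ne', sub_self,
      abs_zero]
    positivity
  · rw [one_apply_ne hij, zero_sub, abs_neg, abs_of_nonneg (by positivity), inv_mul_eq_div]
    gcongr
    exact_mod_cast hf i j hij

lemma card_filter_eval_eq_lt {F : Type*} [Field F] [Fintype F] [DecidableEq F] {k : ℕ}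
    {P Q : F[X]} (hP : P ∈ degreeLT F k) (hQ : Q ∈ degreeLT F k) (hPQ : P ≠ Q) :
    #{x | P.eval x = Q.eval x} < k := by
  by_contra! hk
  rw [mem_degreeLT] at hP hQ
  exact hPQ (eq_of_degrees_lt_of_eval_finset_eq _
    (hP.trans_le (by exact_mod_cast hk)) (hQ.trans_le (by exact_mod_cast hk))
    fun x hx => (mem_filter.1 hx).2)

lemma approxNumber_le_div_card_of_le_card_pow {p : ℝ} (hp0 : 0 < p) (hp1 : p ≤ 1) {N n : ℕ}
    (F : Type*) [Field F] [Fintype F] (k : ℕ) (hN : N ≤ Fintype.card F ^ k)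
    (hn : Fintype.card F ^ 2 < n) :
    approxNumber (ENNReal.ofReal p) ∞ N n ≤ k / Fintype.card F := by
  classical
  obtain ⟨e⟩ : Nonempty (Fin N ↪ (Fin k → F)) :=
    Function.Embedding.nonempty_of_card_le (by simpa using hN)
  let P : Fin N → degreeLT F k := fun i => (degreeLTEquiv F k).symm (e i)
  have hP : Function.Injective P := (degreeLTEquiv F k).symm.injective.comp e.injective
  refine approxNumber_le_of_card_agree_le hp0 hp1 (by rwa [← sq])
    (fun i x => (P i : F[X]).eval x) fun i j hij => ?_
  exact (card_filter_eval_eq_lt (P i).2 (P j).2 fun h => hij (hP (Subtype.ext h))).le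

lemma exists_prime_sq_lt_le_four_mul_sq {n : ℕ} (hn : 5 ≤ n) :
    ∃ q, q.Prime ∧ q ^ 2 < n ∧ n ≤ 4 * q ^ 2 := by
  have hsq := Nat.sqrt_le' (n - 1)
  have hsq' := Nat.lt_succ_sqrt' (n - 1)
  have hr : 2 ≤ Nat.sqrt (n - 1) := Nat.le_sqrt'.2 (by omega)
  generalize Nat.sqrt (n - 1) = r at hsq hsq' hr
  obtain ⟨q, hq, hrq, hqr⟩ := Nat.exists_prime_lt_and_le_two_mul (r / 2) (by omega)
  have hqr2 : q ^ 2 ≤ r ^ 2 := Nat.pow_le_pow_left (by omega) 2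
  have hrq2 : (r + 1) ^ 2 ≤ 4 * q ^ 2 := by
    rw [show 4 * q ^ 2 = (2 * q) ^ 2 by ring]
    exact Nat.pow_le_pow_left (by omega) 2
  exact ⟨q, hq, by omega, by rw [Nat.succ_eq_add_one] at hsq'; omega⟩

lemma rpow_le_four_rpow_mul_rpow {n q N k : ℕ} {α β : ℝ} (hα : 0 ≤ α) (hβ : 0 ≤ β)
    (hk : 2 * α ≤ k * β) (hnq : n ≤ 4 * q ^ 2) (hqN : q ^ k ≤ N) (hq : 1 ≤ q) :
    (n : ℝ) ^ α ≤ 4 ^ α * (N : ℝ) ^ β := by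
  have hqR : (1 : ℝ) ≤ q := by exact_mod_cast hq
  calc (n : ℝ) ^ α ≤ (4 * (q : ℝ) ^ (2 : ℝ)) ^ α := by
        gcongr
        exact_mod_cast hnq
    _ = 4 ^ α * (q : ℝ) ^ (2 * α) := by
        rw [Real.mul_rpow (by norm_num) (by positivity), ← Real.rpow_mul (by positivity)]
    _ ≤ 4 ^ α * (q : ℝ) ^ (k * β) := by gcongr
    _ = 4 ^ α * ((q : ℝ) ^ k) ^ β := by rw [Real.rpow_mul (by positivity), Real.rpow_natCast]
    _ ≤ 4 ^ α * (N : ℝ) ^ β := by gcongr; exact_mod_cast hqN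

lemma rpow_mul_approxNumber_le_of_le_prime_pow {p β : ℝ} (hp0 : 0 < p) (hp1 : p ≤ 1)
    (hβ : 0 ≤ β) {N n q k : ℕ} (hq : q.Prime) (hqn : q ^ 2 < n) (hnq : n ≤ 4 * q ^ 2)
    (hNq : N ≤ q ^ k) :
    (n : ℝ) ^ (β + 1 / 2) * approxNumber (ENNReal.ofReal p) ∞ N n ≤ 2 * k * (n : ℝ) ^ β := by
  have : Fact q.Prime := ⟨hq⟩
  have ha := approxNumber_le_div_card_of_le_card_pow hp0 hp1 (ZMod q) k (by simpa using hNq)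
    (by simpa using hqn)
  rw [ZMod.card] at ha
  have hsqrt : √(n : ℝ) ≤ 2 * q := by
    rw [Real.sqrt_le_left (by positivity)]
    exact_mod_cast hnq.trans_eq (by ring)
  have hqR : (0 : ℝ) < q := by exact_mod_cast hq.pos
  calc (n : ℝ) ^ (β + 1 / 2) * approxNumber (ENNReal.ofReal p) ∞ N n
      ≤ (n : ℝ) ^ β * √(n : ℝ) * (k / q) := by
        rw [Real.rpow_add' (by positivity) (by linarith : 0 < β + 1 / 2).ne',
          ← Real.sqrt_eq_rpow]
        gcongr
    _ ≤ (n : ℝ) ^ β * (2 * q) * (k / q) := by gcongr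
    _ = 2 * k * (n : ℝ) ^ β := by field_simp

/-- For `0 < p₁ ≤ 1`, `0 < λ < 1` and `h = 2(1-λ)` there is `C > 0` with
`sup_n n^{1/h}·a_n(id : ℓ_{p₁}^N → ℓ_∞^N) ≤ C·N^{λ/(2(1-λ))}` for every `N`. -/
theorem approx_ideal_norm_critical (p₁ lam : ℝ) (h1 : 0 < p₁) (h2 : p₁ ≤ 1)
    (hl1 : 0 < lam) (hl2 : lam < 1) :
    ∃ C : ℝ, 0 < C ∧ ∀ N n : ℕ, 1 ≤ n →
      (n : ℝ) ^ (1 / (2 * (1 - lam))) * approxNumber (ENNReal.ofReal p₁) ∞ N n ≤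
        C * (N : ℝ) ^ (lam / (2 * (1 - lam))) := by
  set α := 1 / (2 * (1 - lam))
  set β := lam / (2 * (1 - lam))
  have hl : 1 - lam ≠ 0 := by linarith
  have hβ : 0 < β := div_pos hl1 (by linarith)
  have hαβ : α = β + 1 / 2 := by simp only [α, β]; field_simp; ring
  obtain ⟨k, hk⟩ : ∃ k : ℕ, 2 / lam ≤ k := ⟨_, Nat.le_ceil _⟩
  have hkβ : 2 * α ≤ k * β := calc
    2 * α = 2 / lam * β := by simp only [α, β]; field_simp
    _ ≤ k * β := by gcongr
  refine ⟨4 ^ α + 2 * k, by positivity, fun N n hn => ?_⟩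
  rcases lt_or_ge N n with hNn | hnN
  · exact (mul_nonpos_of_nonneg_of_nonpos (by positivity) (approxNumber_nonpos h1 h2 hNn)).trans
      (by positivity)
  have hNβ : (1 : ℝ) ≤ (N : ℝ) ^ β := Real.one_le_rpow (by exact_mod_cast hn.trans hnN) hβ.le
  have of_rpow_le : (n : ℝ) ^ α ≤ 4 ^ α * (N : ℝ) ^ β → _ := fun h => calc
    (n : ℝ) ^ α * approxNumber (ENNReal.ofReal p₁) ∞ N n ≤ (n : ℝ) ^ α * 1 := by
      gcongr; exact approxNumber_le_one h1 h2 hn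
    _ ≤ (4 ^ α + 2 * k) * (N : ℝ) ^ β := by nlinarith
  rcases lt_or_ge n 5 with hn5 | hn5
  · exact of_rpow_le (rpow_le_four_rpow_mul_rpow (by positivity) hβ.le hkβ
      (by omega) (by simpa using hn.trans hnN) le_rfl)
  obtain ⟨q, hq, hqn, hnq⟩ := exists_prime_sq_lt_le_four_mul_sq hn5
  rcases le_or_gt N (q ^ k) with hNq | hqN
  · calc (n : ℝ) ^ α * approxNumber (ENNReal.ofReal p₁) ∞ N n
        = (n : ℝ) ^ (β + 1 / 2) * approxNumber (ENNReal.ofReal p₁) ∞ N n := by rw [hαβ]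
      _ ≤ 2 * k * (n : ℝ) ^ β :=
        rpow_mul_approxNumber_le_of_le_prime_pow h1 h2 hβ.le hq hqn hnq hNq
      _ ≤ (4 ^ α + 2 * k) * (N : ℝ) ^ β := by gcongr; exact le_add_of_nonneg_left (by positivity)
  · exact of_rpow_le (rpow_le_four_rpow_mul_rpow (by positivity) hβ.le hkβ hnq hqN.le hq.one_le)
end
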